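/- Given a geometric classical r-matrix datum on A with V invariant under every a¹ᵢ and b¹ⱼ, define ρ: V* → Der(A) by ρ(y) = Σᵢ y(a⁰ᵢ)·a¹ᵢ + Σⱼ y(b⁰ⱼ)·b¹ⱼ. Then for all x,y ∈ V*: ρ(x⋆y) = [−Σₖ x(a⁰ₖ)·a¹ₖ, ρ(y)] in Der(A). -/

import Mathlib

open TensorProduct

set_option synthInstance.maxHeartbeats 1000000
set_option maxHeartbeats 1000000

/-- A *geometric classical r-matrix datum* on a commutative ℂ-algebra `A`:
finite families `a¹ᵢ, b¹ⱼ` of derivations and `a⁰ᵢ, b⁰ⱼ` of elements of `A`,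
each linearly independent over ℂ, satisfying the three components (E1)–(E3)
of the classical Yang–Baxter equation. -/
structure GeomRMatrixDatum (A : Type*) [CommRing A] [Algebra ℂ A] where
  m : ℕ
  n : ℕ
  a1 : Fin m → Derivation ℂ A A
  a0 : Fin m → A
  b1 : Fin n → Derivation ℂ A A
  b0 : Fin n → A
  indep_a1 : LinearIndependent ℂ a1
  indep_a0 : LinearIndependent ℂ a0
  indep_b1 : LinearIndependent ℂ b1
  indep_b0 : LinearIndependent ℂ b0
  E1 : ∑ i, ∑ k, (⁅a1 i, a1 k⁆ ⊗ₜ[ℂ] (a0 i ⊗ₜ[ℂ] a0 k))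
      = ∑ i, ∑ k, (a1 i ⊗ₜ[ℂ] ((a1 k) (a0 i) ⊗ₜ[ℂ] a0 k))
      + ∑ i, ∑ l, (a1 i ⊗ₜ[ℂ] (b0 l ⊗ₜ[ℂ] (b1 l) (a0 i)))
  E2 : ∑ j, ∑ k, ((a1 k) (b0 j) ⊗ₜ[ℂ] (b1 j ⊗ₜ[ℂ] a0 k))
      = ∑ j, ∑ k, (b0 j ⊗ₜ[ℂ] (⁅b1 j, a1 k⁆ ⊗ₜ[ℂ] a0 k))
      + ∑ j, ∑ k, (b0 j ⊗ₜ[ℂ] (a1 k ⊗ₜ[ℂ] (b1 j) (a0 k)))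
  E3 : ∑ i, ∑ l, ((a1 i) (b0 l) ⊗ₜ[ℂ] (a0 i ⊗ₜ[ℂ] b1 l))
      + ∑ j, ∑ l, (b0 j ⊗ₜ[ℂ] ((b1 j) (b0 l) ⊗ₜ[ℂ] b1 l))
      + ∑ j, ∑ l, (b0 j ⊗ₜ[ℂ] (b0 l ⊗ₜ[ℂ] ⁅b1 j, b1 l⁆)) = 0

variable {A : Type*} [CommRing A] [Algebra ℂ A]

/-- `V₁ = span_ℂ{a⁰ᵢ}`. -/
def GeomRMatrixDatum.V1 (D : GeomRMatrixDatum A) : Submodule ℂ A :=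
  Submodule.span ℂ (Set.range D.a0)

/-- `V₂ = span_ℂ{b⁰ⱼ}`. -/
def GeomRMatrixDatum.V2 (D : GeomRMatrixDatum A) : Submodule ℂ A :=
  Submodule.span ℂ (Set.range D.b0)

/-- `V = V₁ + V₂`. -/
def GeomRMatrixDatum.V (D : GeomRMatrixDatum A) : Submodule ℂ A := D.V1 ⊔ D.V2

theorem GeomRMatrixDatum.a0_mem_V (D : GeomRMatrixDatum A) (i : Fin D.m) :
    D.a0 i ∈ D.V :=
  Submodule.mem_sup_left (Submodule.subset_span (Set.mem_range_self i))

theorem GeomRMatrixDatum.b0_mem_V (D : GeomRMatrixDatum A) (j : Fin D.n) :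
    D.b0 j ∈ D.V :=
  Submodule.mem_sup_right (Submodule.subset_span (Set.mem_range_self j))

/-- The operation `(x⋆y)(f) = Σᵢ x(a⁰ᵢ)·y(a¹ᵢ f)` on `V* = Module.Dual ℂ V`. -/
noncomputable def starOp (D : GeomRMatrixDatum A)
    (hA : ∀ i : Fin D.m, ∀ f ∈ D.V, D.a1 i f ∈ D.V)
    (x y : Module.Dual ℂ D.V) : Module.Dual ℂ D.V :=
  ∑ i, x ⟨D.a0 i, D.a0_mem_V i⟩ • (y ∘ₗ ((D.a1 i).toLinearMap.restrict (hA i)))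

/-- The operation `(x∘y)(f) = Σⱼ y(b⁰ⱼ)·x(b¹ⱼ f)` on `V* = Module.Dual ℂ V`. -/
noncomputable def circOp (D : GeomRMatrixDatum A)
    (hB : ∀ j : Fin D.n, ∀ f ∈ D.V, D.b1 j f ∈ D.V)
    (x y : Module.Dual ℂ D.V) : Module.Dual ℂ D.V :=
  ∑ j, y ⟨D.b0 j, D.b0_mem_V j⟩ • (x ∘ₗ ((D.b1 j).toLinearMap.restrict (hB j)))

/-- The bracket `[x,y] = x∘y + y⋆x` on `V*`. -/
noncomputable def bracketOp (D : GeomRMatrixDatum A)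
    (hA : ∀ i : Fin D.m, ∀ f ∈ D.V, D.a1 i f ∈ D.V)
    (hB : ∀ j : Fin D.n, ∀ f ∈ D.V, D.b1 j f ∈ D.V)
    (x y : Module.Dual ℂ D.V) : Module.Dual ℂ D.V :=
  circOp D hB x y + starOp D hA y x

/-- The map `ρ : V* → Der(A)`, `ρ(x) = Σᵢ x(a⁰ᵢ)·a¹ᵢ + Σⱼ x(b⁰ⱼ)·b¹ⱼ`. -/
noncomputable def rhoOp (D : GeomRMatrixDatum A)
    (x : Module.Dual ℂ D.V) : Derivation ℂ A A :=
  ∑ i, x ⟨D.a0 i, D.a0_mem_V i⟩ • D.a1 i + ∑ j, x ⟨D.b0 j, D.b0_mem_V j⟩ • D.b1 j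

/-!
Extend `x` and `y` to functionals `φ`, `ψ` on all of `A` (possible since `V` is a subspace of a
ℂ-vector space). For arbitrary functionals on `A` the identity `ρ(φ⋆ψ) = [ρ(ψ), Σₖ φ(a⁰ₖ)·a¹ₖ]`
holds: contracting (E1) with `id ⊗ ψ ⊗ φ` and (E2) with `ψ ⊗ id ⊗ φ` and adding the results,
the mixed terms `Σ ψ(b⁰ⱼ) φ(b¹ⱼ a⁰ₖ)·a¹ₖ` cancel.
-/

namespace GeomRMatrixDatum

variable (D : GeomRMatrixDatum A) (φ ψ : Module.Dual ℂ A)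

noncomputable def rhoDual : Derivation ℂ A A :=
  ∑ i, φ (D.a0 i) • D.a1 i + ∑ j, φ (D.b0 j) • D.b1 j

noncomputable def starDual : Module.Dual ℂ A :=
  ∑ k, φ (D.a0 k) • ψ ∘ₗ (D.a1 k).toLinearMap

theorem contract_E1 :
    ∑ i, ∑ k, (ψ (D.a0 i) * φ (D.a0 k)) • ⁅D.a1 i, D.a1 k⁆
      = ∑ i, ∑ k, (ψ (D.a1 k (D.a0 i)) * φ (D.a0 k)) • D.a1 i
        + ∑ i, ∑ l, (ψ (D.b0 l) * φ (D.b1 l (D.a0 i))) • D.a1 i := by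
  simpa [map_sum, smul_smul] using congrArg ((TensorProduct.rid ℂ _).toLinearMap ∘ₗ
    LinearMap.lTensor _ ((TensorProduct.lid ℂ ℂ).toLinearMap ∘ₗ TensorProduct.map ψ φ)) D.E1

theorem contract_E2 :
    ∑ j, ∑ k, (ψ (D.a1 k (D.b0 j)) * φ (D.a0 k)) • D.b1 j
      = ∑ j, ∑ k, (ψ (D.b0 j) * φ (D.a0 k)) • ⁅D.b1 j, D.a1 k⁆
        + ∑ j, ∑ k, (ψ (D.b0 j) * φ (D.b1 j (D.a0 k))) • D.a1 k := by
  simpa [map_sum, smul_smul] using congrArg ((TensorProduct.rid ℂ _).toLinearMap ∘ₗ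
    LinearMap.lTensor _ φ ∘ₗ (TensorProduct.lid ℂ _).toLinearMap ∘ₗ LinearMap.rTensor _ ψ) D.E2

theorem rhoDual_starDual :
    D.rhoDual (D.starDual φ ψ) = ⁅D.rhoDual ψ, ∑ k, φ (D.a0 k) • D.a1 k⁆ :=
  calc D.rhoDual (D.starDual φ ψ)
      = ∑ i, ∑ k, (ψ (D.a1 k (D.a0 i)) * φ (D.a0 k)) • D.a1 i
        + ∑ j, ∑ k, (ψ (D.a1 k (D.b0 j)) * φ (D.a0 k)) • D.b1 j := by
        simp only [rhoDual, starDual, LinearMap.sum_apply, LinearMap.smul_apply,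
          LinearMap.comp_apply, smul_eq_mul, Finset.sum_smul, mul_comm, Derivation.coeFn_coe]
    _ = ∑ i, ∑ k, (ψ (D.a0 i) * φ (D.a0 k)) • ⁅D.a1 i, D.a1 k⁆
        + ∑ j, ∑ k, (ψ (D.b0 j) * φ (D.a0 k)) • ⁅D.b1 j, D.a1 k⁆ := by
        rw [D.contract_E1, D.contract_E2, Finset.sum_comm (γ := Fin D.m) (α := Fin D.n)]
        abel
    _ = ⁅D.rhoDual ψ, ∑ k, φ (D.a0 k) • D.a1 k⁆ := by
        simp only [rhoDual, lie_sum, add_lie, sum_lie, lie_smul, smul_lie, smul_add,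
          Finset.sum_add_distrib, Finset.smul_sum, smul_smul, mul_comm (φ _)]
        congr 1 <;> exact Finset.sum_comm

end GeomRMatrixDatum

theorem rhoOp_comp_subtype (D : GeomRMatrixDatum A) (φ : Module.Dual ℂ A) :
    rhoOp D (φ ∘ₗ D.V.subtype) = D.rhoDual φ :=
  rfl

theorem starOp_comp_subtype (D : GeomRMatrixDatum A)
    (hA : ∀ i : Fin D.m, ∀ f ∈ D.V, D.a1 i f ∈ D.V) (φ ψ : Module.Dual ℂ A) :
    starOp D hA (φ ∘ₗ D.V.subtype) (ψ ∘ₗ D.V.subtype) = D.starDual φ ψ ∘ₗ D.V.subtype := by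
  ext
  simp [starOp, GeomRMatrixDatum.starDual]

theorem rho_star_eq_bracket_general (D : GeomRMatrixDatum A)
    (hA : ∀ i : Fin D.m, ∀ f ∈ D.V, D.a1 i f ∈ D.V)
    (x y : Module.Dual ℂ D.V) :
    rhoOp D (starOp D hA x y)
      = ⁅- ∑ k, x ⟨D.a0 k, D.a0_mem_V k⟩ • D.a1 k, rhoOp D y⁆ := by
  obtain ⟨φ, rfl⟩ := LinearMap.exists_extend x
  obtain ⟨ψ, rfl⟩ := LinearMap.exists_extend y
  rw [starOp_comp_subtype, rhoOp_comp_subtype, rhoOp_comp_subtype, neg_lie, ← lie_skew, neg_neg]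
  exact D.rhoDual_starDual φ ψ

/-- `ρ(x⋆y) = [−Σₖ x(a⁰ₖ)·a¹ₖ, ρ(y)]` in `Der(A)`. -/
theorem rho_star_eq_bracket (D : GeomRMatrixDatum A)
    (hA : ∀ i : Fin D.m, ∀ f ∈ D.V, D.a1 i f ∈ D.V)
    (hB : ∀ j : Fin D.n, ∀ f ∈ D.V, D.b1 j f ∈ D.V)
    (x y : Module.Dual ℂ D.V) :
    rhoOp D (starOp D hA x y)
      = ⁅- ∑ k, x ⟨D.a0 k, D.a0_mem_V k⟩ • D.a1 k, rhoOp D y⁆ :=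
  rho_star_eq_bracket_general D hA x y
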